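/- arXiv:1504.01019 — 5 statements merged into one kernel-verified Lean document; each statement's English description precedes it below -/
import Mathlib

section
/- Let G be a finite simple graph whose vertex set is partitioned into two nonempty sets V and C such that every edge of G joins a vertex of V to a vertex of C, every vertex of V has degree d_v ≥ 2, and every vertex of C has degree d_c ≥ 2. If the girth of G is at least g (for an integer g ≥ 2), then |V| ≥ ((d_v − 1)(d_c − 1))^{⌊(g−2)/4⌋}. -/
/-!
Fix `v ∈ V` and count the paths of length `2k` ending at `v`, where `4k < girth`. Two of them
with the same start vertex would close a cycle of length at most `4k`, so their start vertices,
which lie in `V` by parity, are distinct. On the other hand a path of length `n` with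
`n + 1 < girth` extends at its start `u` through every neighbour of `u` except its second vertex:
any other neighbour lying on the path would close a cycle of length at most `n + 1`. Going out
of `V` this gives at least `d_v - 1` choices and going out of `C` at least `d_c - 1`.
-/

open Finset

namespace SimpleGraph

variable {α : Type*} {G : SimpleGraph α}

theorem IsBipartiteWith.mem_of_walk {s t : Set α} (h : G.IsBipartiteWith s t) {u w : α}
    (p : G.Walk u w) (hw : w ∈ s) : (Even p.length → u ∈ s) ∧ (Odd p.length → u ∈ t) := by
  induction p with
  | nil => simp [hw]
  | cons hadj q ih =>
    rw [Walk.length_cons, Nat.even_add_one, Nat.not_even_iff_odd, Nat.odd_add_one,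
      Nat.not_odd_iff_even]
    exact ⟨fun hq => h.symm.mem_of_mem_adj ((ih hw).2 hq) hadj.symm,
      fun hq => h.mem_of_mem_adj ((ih hw).1 hq) hadj.symm⟩

namespace Walk

theorem IsPath.eq_snd_of_adj_of_length_lt_egirth {u v w : α} {p : G.Walk u v} (hp : p.IsPath)
    (hlen : p.length + 1 < G.egirth) (hadj : G.Adj u w) (hw : w ∈ p.support) : w = p.snd := by
  classical
  refine hp.eq_snd_of_mem_edges (by_contra fun hnot => ?_)
  have hcyc : (cons hadj.symm (p.takeUntil w hw)).IsCycle :=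
    (cons_isCycle_iff _ _).2 ⟨hp.takeUntil hw,
      fun he => hnot (p.edges_takeUntil_subset_edges hw (Sym2.eq_swap ▸ he))⟩
  have hle : (cons hadj.symm (p.takeUntil w hw)).length ≤ p.length + 1 :=
    Nat.succ_le_succ (p.length_takeUntil_le_length hw)
  exact (G.egirth_le_length hcyc).not_gt (hlen.trans_le' (by exact_mod_cast hle))

theorem IsPath.degree_sub_one_le_card_neighborFinset_filter_notMem_support [DecidableEq α]
    {u v : α} [Fintype (G.neighborSet u)] {p : G.Walk u v} (hp : p.IsPath)
    (hlen : p.length + 1 < G.egirth) :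
    G.degree u - 1 ≤ #{x ∈ G.neighborFinset u | x ∉ p.support} := by
  have hsupport : #{x ∈ G.neighborFinset u | x ∈ p.support} ≤ 1 :=
    card_le_one.2 fun x hx y hy => by
      rw [mem_filter, mem_neighborFinset] at hx hy
      rw [hp.eq_snd_of_adj_of_length_lt_egirth hlen hx.1 hx.2,
        hp.eq_snd_of_adj_of_length_lt_egirth hlen hy.1 hy.2]
  have hsplit := card_filter_add_card_filter_not (s := G.neighborFinset u) (· ∈ p.support)
  rw [card_neighborFinset_eq_degree] at hsplit
  omega

end Walk

variable [Fintype α] [DecidableRel G.Adj]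

section pathsTo

variable [DecidableEq α]

variable (G) in
/-- Paths are indexed by their start vertex, where `Walk.cons` extends them. -/
def pathsTo (v : α) (n : ℕ) : Finset (Σ u, G.Walk u v) :=
  univ.sigma fun u => {p ∈ G.finsetWalkLength n u v | p.IsPath}

theorem mem_pathsTo {v : α} {n : ℕ} {s : Σ u, G.Walk u v} :
    s ∈ G.pathsTo v n ↔ s.2.IsPath ∧ s.2.length = n := by
  simp [pathsTo, mem_finsetWalkLength_iff, and_comm]

theorem IsBipartiteWith.fst_mem_of_mem_pathsTo {V C : Set α} (hG : G.IsBipartiteWith V C)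
    {v : α} (hv : v ∈ V) {n : ℕ} {s : Σ u, G.Walk u v} (hs : s ∈ G.pathsTo v n) :
    (Even n → s.1 ∈ V) ∧ (Odd n → s.1 ∈ C) :=
  (mem_pathsTo.1 hs).2 ▸ hG.mem_of_walk s.2 hv

theorem sum_card_extensions_le_card_pathsTo_succ (v : α) (n : ℕ) :
    ∑ s ∈ G.pathsTo v n, #{x ∈ G.neighborFinset s.1 | x ∉ s.2.support} ≤
      #(G.pathsTo v (n + 1)) := by
  rw [← card_sigma]
  refine card_le_card_of_surjOn (fun s => ⟨⟨s.2.snd, s.2.tail⟩, s.1⟩) ?_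
  rintro ⟨⟨u, p⟩, x⟩ hs
  simp only [coe_sigma, Set.mem_sigma_iff, mem_coe, mem_pathsTo, coe_filter, Set.mem_ofPred_eq,
    mem_neighborFinset] at hs
  obtain ⟨⟨hp, rfl⟩, hadj, hx⟩ := hs
  refine ⟨⟨x, .cons hadj.symm p⟩, ?_, ?_⟩
  · simp [mem_pathsTo, Walk.cons_isPath_iff, hp, hx]
  · cases p <;> rfl

theorem mul_card_pathsTo_le_card_pathsTo_succ {v : α} {n d : ℕ} (hlen : n + 1 < G.egirth)
    (hdeg : ∀ s ∈ G.pathsTo v n, d ≤ G.degree s.1) :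
    (d - 1) * #(G.pathsTo v n) ≤ #(G.pathsTo v (n + 1)) := by
  refine le_trans ?_ (sum_card_extensions_le_card_pathsTo_succ v n)
  rw [mul_comm, ← smul_eq_mul]
  refine card_nsmul_le_sum _ _ _ fun s hs => ?_
  obtain ⟨hp, hn⟩ := mem_pathsTo.1 hs
  exact (Nat.sub_le_sub_right (hdeg s hs) 1).trans
    (hp.degree_sub_one_le_card_neighborFinset_filter_notMem_support (hn ▸ hlen))

theorem IsBipartiteWith.pow_le_card_pathsTo {V C : Set α} (hG : G.IsBipartiteWith V C)
    {v : α} (hv : v ∈ V) {d_v d_c : ℕ} (hdegV : ∀ u ∈ V, d_v ≤ G.degree u)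
    (hdegC : ∀ u ∈ C, d_c ≤ G.degree u) {k : ℕ} (hk : (2 * k : ℕ) < G.egirth) :
    ((d_v - 1) * (d_c - 1)) ^ k ≤ #(G.pathsTo v (2 * k)) := by
  induction k with
  | zero => exact one_le_card.2 ⟨⟨v, .nil⟩, mem_pathsTo.2 ⟨.nil, rfl⟩⟩
  | succ k ih =>
    have hlt (m : ℕ) (hm : m ≤ 2 * (k + 1)) : (m : ℕ∞) < G.egirth :=
      hk.trans_le' (by exact_mod_cast hm)
    have hstepV : (d_v - 1) * #(G.pathsTo v (2 * k)) ≤ #(G.pathsTo v (2 * k + 1)) :=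
      mul_card_pathsTo_le_card_pathsTo_succ (by exact_mod_cast hlt (2 * k + 1) (by omega))
        fun s hs => hdegV _ ((hG.fst_mem_of_mem_pathsTo hv hs).1 (even_two_mul k))
    have hstepC : (d_c - 1) * #(G.pathsTo v (2 * k + 1)) ≤ #(G.pathsTo v (2 * k + 1 + 1)) :=
      mul_card_pathsTo_le_card_pathsTo_succ (by exact_mod_cast hlt (2 * k + 1 + 1) le_rfl)
        fun s hs => hdegC _ ((hG.fst_mem_of_mem_pathsTo hv hs).2 (odd_two_mul_add_one k))
    calc ((d_v - 1) * (d_c - 1)) ^ (k + 1)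
        = (d_c - 1) * ((d_v - 1) * ((d_v - 1) * (d_c - 1)) ^ k) := by ring
      _ ≤ (d_c - 1) * ((d_v - 1) * #(G.pathsTo v (2 * k))) := by
        gcongr
        exact ih (hlt _ (by omega))
      _ ≤ #(G.pathsTo v (2 * (k + 1))) := (Nat.mul_le_mul_left _ hstepV).trans hstepC

theorem card_pathsTo_le_card {v : α} {n : ℕ} (hn : (2 * n : ℕ) < G.egirth) {S : Finset α}
    (hS : ∀ s ∈ G.pathsTo v n, s.1 ∈ S) : #(G.pathsTo v n) ≤ #S := by
  refine card_le_card_of_injOn Sigma.fst hS ?_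
  rintro ⟨u, p⟩ hp ⟨u', q⟩ hq (rfl : u = u')
  obtain ⟨hp, hpn⟩ := mem_pathsTo.1 hp
  obtain ⟨hq, hqn⟩ := mem_pathsTo.1 hq
  by_contra hne
  obtain ⟨w, -, -, c, hc, hlen⟩ :=
    hp.exists_isCycle_length_le_add_of_ne hq (by rintro rfl; simp at hne)
  exact (G.egirth_le_length hc).not_gt (hn.trans_le' (by exact_mod_cast (by omega)))

end pathsTo

theorem IsBipartiteWith.pow_le_card_of_lt_egirth {V : Finset α} {C : Set α}
    (hG : G.IsBipartiteWith V C) (hV : V.Nonempty) {d_v d_c : ℕ}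
    (hdegV : ∀ u ∈ V, d_v ≤ G.degree u) (hdegC : ∀ u ∈ C, d_c ≤ G.degree u) {k : ℕ}
    (hk : (4 * k : ℕ) < G.egirth) : ((d_v - 1) * (d_c - 1)) ^ k ≤ #V := by
  classical
  obtain ⟨v, hv⟩ := hV
  have h2k : (2 * (2 * k) : ℕ) < G.egirth := by rwa [← mul_assoc]
  calc ((d_v - 1) * (d_c - 1)) ^ k ≤ #(G.pathsTo v (2 * k)) :=
        hG.pow_le_card_pathsTo hv hdegV hdegC (h2k.trans_le' (by exact_mod_cast (by omega)))
    _ ≤ #V := card_pathsTo_le_card h2k fun s hs =>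
        (hG.fst_mem_of_mem_pathsTo hv hs).1 (even_two_mul k)

end SimpleGraph

theorem blocklength_lower_bound_of_girth_general
    {α : Type*} [Fintype α] (G : SimpleGraph α) [DecidableRel G.Adj]
    (V C : Finset α) (hV : V.Nonempty)
    (hdisj : Disjoint V C)
    (hbip : ∀ a b : α, G.Adj a b → (a ∈ V ∧ b ∈ C) ∨ (a ∈ C ∧ b ∈ V))
    (d_v d_c : ℕ)
    (hdegV : ∀ v ∈ V, G.degree v = d_v)
    (hdegC : ∀ c ∈ C, G.degree c = d_c)
    (g : ℕ) (hgirth : (g : ℕ∞) ≤ G.girth) :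
    ((d_v - 1) * (d_c - 1)) ^ ((g - 2) / 4) ≤ V.card := by
  have hG : G.IsBipartiteWith V C := ⟨Finset.disjoint_coe.2 hdisj, fun a b h => hbip a b h⟩
  -- `max g 3` rather than `g`: for `g < 2` the exponent is `0` by truncated subtraction.
  have hk : (4 * ((g - 2) / 4) : ℕ) < G.egirth :=
    calc (4 * ((g - 2) / 4) : ℕ) < ((max g 3 : ℕ) : ℕ∞) := by exact_mod_cast (by omega)
      _ ≤ G.egirth := by
        rw [Nat.mono_cast.map_max]
        exact max_le (hgirth.trans (ENat.natCast_toNat_le_self _)) G.three_le_egirth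
  exact hG.pow_le_card_of_lt_egirth hV (fun u hu => (hdegV u hu).ge)
    (fun u hu => (hdegC u hu).ge) hk

/-- **Lemma 1 (lower bound).** If a finite simple graph is bipartite with parts `V` and `C`
(both nonempty), every vertex in `V` has degree `d_v ≥ 2`, every vertex in `C` has degree
`d_c ≥ 2`, and the girth is at least `g ≥ 2`, then `|V| ≥ ((d_v−1)(d_c−1))^⌊(g−2)/4⌋`. -/
theorem blocklength_lower_bound_of_girth
    {α : Type*} [Fintype α] [DecidableEq α] (G : SimpleGraph α) [DecidableRel G.Adj]
    (V C : Finset α) (hV : V.Nonempty) (hC : C.Nonempty)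
    (hdisj : Disjoint V C) (hcover : V ∪ C = Finset.univ)
    (hbip : ∀ a b : α, G.Adj a b → (a ∈ V ∧ b ∈ C) ∨ (a ∈ C ∧ b ∈ V))
    (d_v d_c : ℕ) (hdv : 2 ≤ d_v) (hdc : 2 ≤ d_c)
    (hdegV : ∀ v ∈ V, G.degree v = d_v)
    (hdegC : ∀ c ∈ C, G.degree c = d_c)
    (g : ℕ) (hg : 2 ≤ g) (hgirth : (g : ℕ∞) ≤ G.girth) :
    ((d_v - 1) * (d_c - 1)) ^ ((g - 2) / 4) ≤ V.card :=
  blocklength_lower_bound_of_girth_general G V C hV hdisj hbip d_v d_c hdegV hdegC g hgirth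
end

section
/- Fix integers d_v, d_c with 3 ≤ d_v < d_c and set K = (d_v − 1)(d_c − 1). For every ε ∈ (0,1) there exists δ > 0, depending only on d_v, d_c, ε, such that for all p₀ ∈ (0, 1/2] and all p ∈ [0, δ·p₀]: (1 − ε)·p₀·K·p ≤ f_A(p) ≤ (1 + ε)·p₀·K·p, where f_A is the Gallager-A density-evolution map with parameters (p₀, d_v, d_c). -/
private lemma pow_lb' (t : ℝ) (ht : t ≤ 2) (n : ℕ) : 1 - n * t ≤ (1 - t) ^ n := by
  have h := one_add_mul_le_pow (show (-2:ℝ) ≤ -t by linarith) n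
  calc 1 - n * t = 1 + n * (-t) := by ring
    _ ≤ (1 + (-t)) ^ n := h
    _ = (1 - t) ^ n := by ring_nf

private lemma pow_ub' (t : ℝ) (ht0 : 0 ≤ t) (ht1 : t ≤ 1) (n : ℕ) :
    (1 - t) ^ n ≤ 1 - n * t + n ^ 2 * t ^ 2 := by
  induction n with
  | zero => norm_num
  | succ n ih =>
    have h1 : (0:ℝ) ≤ 1 - t := by linarith
    have h3 : (1 - t) * (1 - t) ^ n ≤ (1 - t) * (1 - n * t + n ^ 2 * t ^ 2) :=
      mul_le_mul_of_nonneg_left ih h1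
    have h2 : (1 - t) ^ (n + 1) = (1 - t) * (1 - t) ^ n := by ring
    rw [h2]
    refine h3.trans ?_
    push_cast
    nlinarith [sq_nonneg t, mul_nonneg (mul_nonneg ht0 ht0) ht0, sq_nonneg ((n:ℝ) * t)]

noncomputable def gallagerA (p₀ : ℝ) (d_v d_c : ℕ) (p : ℝ) : ℝ :=
  p₀ - p₀ * ((1 + (1 - 2 * p) ^ (d_c - 1)) / 2) ^ (d_v - 1)
     + (1 - p₀) * ((1 - (1 - 2 * p) ^ (d_c - 1)) / 2) ^ (d_v - 1)

/-- One-step linearization sandwich for Gallager-A density evolution (key estimate in the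
proof of Lemma 3). -/
theorem gallagerA_linearization (d_v d_c : ℕ) (hdv : 3 ≤ d_v) (hlt : d_v < d_c)
    (K : ℝ) (hK : K = ((d_v : ℝ) - 1) * ((d_c : ℝ) - 1))
    (ε : ℝ) (hε : ε ∈ Set.Ioo (0 : ℝ) 1) :
    ∃ δ > (0 : ℝ), ∀ p₀ ∈ Set.Ioc (0 : ℝ) (1 / 2), ∀ p ∈ Set.Icc (0 : ℝ) (δ * p₀),
      (1 - ε) * p₀ * K * p ≤ gallagerA p₀ d_v d_c p ∧
      gallagerA p₀ d_v d_c p ≤ (1 + ε) * p₀ * K * p := by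
  obtain ⟨hε0, hε1⟩ := hε
  obtain ⟨M, hMdef⟩ : ∃ M : ℝ, M = (d_v : ℝ) - 1 := ⟨_, rfl⟩
  obtain ⟨N, hNdef⟩ : ∃ N : ℝ, N = (d_c : ℝ) - 1 := ⟨_, rfl⟩
  have hdvR : (3:ℝ) ≤ (d_v : ℝ) := by exact_mod_cast hdv
  have hdcR : (4:ℝ) ≤ (d_c : ℝ) := by exact_mod_cast (show 4 ≤ d_c by omega)
  have hM2 : 2 ≤ M := by rw [hMdef]; linarith
  have hN3 : 3 ≤ N := by rw [hNdef]; linarith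
  have hM0 : (0:ℝ) < M := by linarith
  have hN0 : (0:ℝ) < N := by linarith
  have hMc : ((d_v - 1 : ℕ) : ℝ) = M := by
    rw [hMdef]; push_cast [Nat.cast_sub (show 1 ≤ d_v by omega)]; ring
  have hNc : ((d_c - 1 : ℕ) : ℝ) = N := by
    rw [hNdef]; push_cast [Nat.cast_sub (show 1 ≤ d_c by omega)]; ring
  have hden : (0:ℝ) < N * (M + 2) := mul_pos hN0 (by linarith)
  refine ⟨ε / (N * (M + 2)), div_pos hε0 hden, ?_⟩
  obtain ⟨δ, hδdef⟩ : ∃ δ : ℝ, δ = ε / (N * (M + 2)) := ⟨_, rfl⟩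
  rw [← hδdef]
  have hδ0 : 0 < δ := hδdef ▸ div_pos hε0 hden
  have hδε : δ * (N * (M + 2)) = ε := by rw [hδdef]; exact div_mul_cancel₀ ε hden.ne'
  have hδ1 : δ ≤ ε := by
    rw [hδdef]; exact div_le_self hε0.le (by nlinarith)
  rintro p₀ ⟨hp₀0, hp₀2⟩ p ⟨hp0, hpδ⟩
  have hp2 : p ≤ 1 / 2 := by
    have h := mul_le_mul hδ1 hp₀2 hp₀0.le hε0.le
    linarith only [hpδ, h, hε1, hε0]
  -- bounds on x = (1-2p)^(d_c - 1)
  obtain ⟨x, hxdef⟩ : ∃ x : ℝ, x = (1 - 2 * p) ^ (d_c - 1) := ⟨_, rfl⟩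
  have hx_lb : 1 - N * (2 * p) ≤ x := by
    rw [hxdef]
    have := pow_lb' (2 * p) (by linarith) (d_c - 1)
    rwa [hNc] at this
  have hx_ub : x ≤ 1 - N * (2 * p) + N ^ 2 * (2 * p) ^ 2 := by
    rw [hxdef]
    have := pow_ub' (2 * p) (by linarith) (by linarith) (d_c - 1)
    rwa [hNc] at this
  have hx0 : (0:ℝ) ≤ x := hxdef ▸ pow_nonneg (by linarith) _
  have hx1 : x ≤ 1 := hxdef ▸ pow_le_one₀ (by linarith) (by linarith)
  obtain ⟨u, hudef⟩ : ∃ u : ℝ, u = (1 - x) / 2 := ⟨_, rfl⟩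
  have hu0 : 0 ≤ u := by rw [hudef]; linarith only [hx1]
  have hu_half : u ≤ 1 / 2 := by rw [hudef]; linarith only [hx0]
  have hu_ub : u ≤ N * p := by rw [hudef]; linarith only [hx_lb]
  have hu_lb : N * p - 2 * N ^ 2 * p ^ 2 ≤ u := by rw [hudef]; linarith only [hx_ub]
  -- rewrite gallagerA
  have hf : gallagerA p₀ d_v d_c p
      = p₀ * (1 - (1 - u) ^ (d_v - 1)) + (1 - p₀) * u ^ (d_v - 1) := by
    have h1 : (1 + x) / 2 = 1 - u := by rw [hudef]; ring
    have h2 : (1 - x) / 2 = u := by rw [hudef]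
    rw [gallagerA, ← hxdef, h1, h2]; ring
  -- bounds on the powers of u
  have hA_lb : 1 - M * u ≤ (1 - u) ^ (d_v - 1) := by
    have := pow_lb' u (by linarith) (d_v - 1)
    rwa [hMc] at this
  have hA_ub : (1 - u) ^ (d_v - 1) ≤ 1 - M * u + M ^ 2 * u ^ 2 := by
    have := pow_ub' u hu0 (by linarith) (d_v - 1)
    rwa [hMc] at this
  have hB_ub : u ^ (d_v - 1) ≤ u ^ 2 := by
    apply pow_le_pow_of_le_one hu0 (by linarith)
    omega
  have hB0 : 0 ≤ u ^ (d_v - 1) := pow_nonneg hu0 _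
  -- key smallness estimate: (2+M)*N*p ≤ ε/2
  have hMN0 : (0:ℝ) ≤ (2 + M) * N := mul_nonneg (by linarith) hN0.le
  have hNp : (2 + M) * N * p ≤ ε / 2 := by
    have h1 : (2 + M) * N * p ≤ (2 + M) * N * (δ * p₀) :=
      mul_le_mul_of_nonneg_left hpδ hMN0
    have hnn : (0:ℝ) ≤ (2 + M) * N * δ := mul_nonneg hMN0 hδ0.le
    have h2 := mul_le_mul_of_nonneg_left hp₀2 hnn
    have h3 : (2 + M) * N * δ = ε := by rw [← hδε]; ring
    nlinarith only [h1, h2, h3]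
  rw [hf, hK, ← hMdef, ← hNdef]
  constructor
  · -- lower bound
    have hMNp0 : (0:ℝ) ≤ M * N * p := mul_nonneg (mul_nonneg hM0.le hN0.le) hp0
    have hA : M * N * p * ((2 + M) * N * p) ≤ M * N * p * (ε / 2) :=
      mul_le_mul_of_nonneg_left hNp hMNp0
    have hBmul : M * (N * p - 2 * N ^ 2 * p ^ 2) ≤ M * u :=
      mul_le_mul_of_nonneg_left hu_lb hM0.le
    have hC : u * u ≤ (N * p) * (N * p) :=
      mul_le_mul hu_ub hu_ub hu0 (mul_nonneg hN0.le hp0)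
    have hD : M ^ 2 * (u * u) ≤ M ^ 2 * ((N * p) * (N * p)) :=
      mul_le_mul_of_nonneg_left hC (sq_nonneg M)
    have hεMNp : (0:ℝ) ≤ ε * (M * N * p) := mul_nonneg hε0.le hMNp0
    have hstep : (1 - ε) * M * N * p ≤ M * u - M ^ 2 * u ^ 2 := by
      nlinarith only [hA, hBmul, hD, hεMNp]
    have hBnn : 0 ≤ (1 - p₀) * u ^ (d_v - 1) := mul_nonneg (by linarith) hB0
    have h1 := mul_le_mul_of_nonneg_left hstep hp₀0.le
    have h2 := mul_le_mul_of_nonneg_left hA_ub hp₀0.le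
    nlinarith only [h1, h2, hBnn]
  · -- upper bound
    have hc0 : (0:ℝ) ≤ N * δ := mul_nonneg hN0.le hδ0.le
    have hεM : ε * M = N * δ * (M + 2) * M := by rw [← hδε]; ring
    have hq : (0:ℝ) ≤ M * (M + 2) - 1 := by nlinarith only [hM2]
    have hNδM : N * δ ≤ ε * M := by
      nlinarith only [hεM, mul_nonneg hc0 hq]
    have hu_ub2 : u ≤ N * (δ * p₀) := by
      have := mul_le_mul_of_nonneg_left hpδ hN0.le
      linarith only [hu_ub, this]
    have hC : u * u ≤ (N * p) * (N * (δ * p₀)) :=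
      mul_le_mul hu_ub hu_ub2 hu0 (mul_nonneg hN0.le hp0)
    have hpos : (0:ℝ) ≤ N * p₀ * p := mul_nonneg (mul_nonneg hN0.le hp₀0.le) hp0
    have hsmall : (N * p) * (N * (δ * p₀)) ≤ ε * M * N * p₀ * p := by
      nlinarith only [mul_le_mul_of_nonneg_left hNδM hpos]
    have hMu : p₀ * (M * u) ≤ p₀ * (M * (N * p)) :=
      mul_le_mul_of_nonneg_left (mul_le_mul_of_nonneg_left hu_ub hM0.le) hp₀0.le
    have hBsmall : (1 - p₀) * u ^ (d_v - 1) ≤ u ^ 2 := by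
      have := mul_nonneg hp₀0.le hB0
      nlinarith only [hB_ub, this]
    have h1 := mul_le_mul_of_nonneg_left hA_lb hp₀0.le
    nlinarith only [h1, hMu, hBsmall, hC, hsmall]
end

section
/- Fix integers d_v, d_c with 3 ≤ d_v < d_c and set K = (d_v − 1)(d_c − 1). There exists δ > 0, depending only on d_v and d_c, such that for every p₀ ∈ (0, 1/2] with (3/2)·K·p₀ ≤ 1 and every sequence (q_i)_{i≥0} of reals with q_0 ∈ [0, δ·p₀] and q_{i+1} = f_A(q_i) for all i (where f_A is the Gallager-A density-evolution map with parameters (p₀, d_v, d_c)), one has for every i ≥ 0: ((1/2)·p₀·K)^i · q_0 ≤ q_i ≤ ((3/2)·p₀·K)^i · q_0. -/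
set_option maxHeartbeats 1000000

lemma bern_lo (x : ℝ) (hx : x ≤ 2) (k : ℕ) : 1 - (k:ℝ) * x ≤ (1 - x)^k := by
  have h := one_add_mul_le_pow (a := -x) (by linarith) k
  have : 1 + (k:ℝ) * (-x) = 1 - k * x := by ring
  rw [this] at h
  simpa [sub_eq_add_neg] using h

lemma bern_hi (x : ℝ) (hx : 0 ≤ x) (hx1 : x ≤ 1) (k : ℕ) :
    (1 - x)^k ≤ 1 - (k:ℝ) * x + ((k:ℝ) * x)^2 := by
  have h1 : (1 - x)^k * (1 + x)^k ≤ 1 := by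
    rw [← mul_pow]
    have h2 : (1-x)*(1+x) = 1 - x^2 := by ring
    rw [h2]
    exact pow_le_one₀ (by nlinarith) (by nlinarith)
  have h2 : 1 + (k:ℝ) * x ≤ (1 + x)^k := one_add_mul_le_pow (by linarith) k
  have h3 : (0:ℝ) ≤ (1 - x)^k := pow_nonneg (by linarith) k
  have h4 : (0:ℝ) ≤ (k:ℝ) * x := by positivity
  nlinarith [mul_le_mul_of_nonneg_left h2 h3]

lemma core_abstract (m n : ℕ) (M N : ℝ) (hM : (m:ℝ) = M) (hN : (n:ℝ) = N)
    (hm2 : 2 ≤ m) (hM2 : (2:ℝ) ≤ M) (hN3 : (3:ℝ) ≤ N)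
    (δ : ℝ) (hδ0 : 0 < δ)
    (hδ1 : 2 * (N + M * N) * δ ≤ 1)
    (hδ2 : N ^ m * δ ≤ M * N / 2)
    (p₀ : ℝ) (hp0 : 0 < p₀) (hp1 : p₀ ≤ 1/2)
    (q : ℝ) (hq0 : 0 ≤ q) (hq1 : q ≤ δ * p₀) :
    1/2 * (M*N) * p₀ * q ≤
        p₀ - p₀ * ((1 + (1 - 2*q)^n)/2)^m + (1 - p₀) * ((1 - (1 - 2*q)^n)/2)^m ∧
      p₀ - p₀ * ((1 + (1 - 2*q)^n)/2)^m + (1 - p₀) * ((1 - (1 - 2*q)^n)/2)^m ≤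
        3/2 * (M*N) * p₀ * q := by
  have hKpos : (0:ℝ) < M * N := by nlinarith
  have hδle : δ ≤ 1 := by nlinarith
  have hqδ : q ≤ δ / 2 := by nlinarith
  have hx0 : (0:ℝ) ≤ 2*q := by linarith
  have hx1 : 2*q ≤ 1 := by nlinarith
  obtain ⟨t, ht0, hthi, htlo, hg1, hg2⟩ :
      ∃ t : ℝ, 0 ≤ t ∧ t ≤ N * q ∧ N*q - 2*N^2*q^2 ≤ t ∧
        (1 + (1 - 2*q)^n)/2 = 1 - t ∧ (1 - (1 - 2*q)^n)/2 = t := by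
    refine ⟨(1 - (1 - 2*q)^n)/2, ?_, ?_, ?_, by ring, rfl⟩
    · have hs1 : (1 - 2*q)^n ≤ 1 := pow_le_one₀ (by linarith) (by linarith)
      linarith
    · have := bern_lo (2*q) (by linarith) n
      rw [hN] at this
      linarith
    · have := bern_hi (2*q) hx0 hx1 n
      rw [hN] at this
      nlinarith
  rw [hg1, hg2]
  have hNq1 : N * q ≤ 1/4 := by
    have e1 : N * q ≤ N * (δ/2) := mul_le_mul_of_nonneg_left hqδ (by linarith)
    have e2 : 0 ≤ (M*N) * δ := by positivity
    linarith
  have ht1 : t ≤ 1 := by linarith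
  have hsmall : 2*N*q + M*N*q ≤ 1/2 := by
    have e1 : 2*(N + M*N)*q ≤ 2*(N + M*N)*(δ/2) :=
      mul_le_mul_of_nonneg_left hqδ (by nlinarith)
    have e2 : 0 ≤ (M*N)*q := by positivity
    nlinarith
  have hu_lo : 1 - M * t ≤ (1 - t)^m := by
    have := bern_lo t (by linarith) m
    rwa [hM] at this
  have hu_hi : (1 - t)^m ≤ 1 - M*t + (M*t)^2 := by
    have := bern_hi t ht0 ht1 m
    rwa [hM] at this
  have hT1_hi : p₀ - p₀ * (1 - t)^m ≤ M*N * p₀ * q := by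
    have h2 : p₀ * (1 - (1-t)^m) ≤ p₀ * (M * t) :=
      mul_le_mul_of_nonneg_left (by linarith) (le_of_lt hp0)
    have h3 : p₀ * (M * t) ≤ p₀ * (M * (N * q)) := by
      apply mul_le_mul_of_nonneg_left _ (le_of_lt hp0)
      nlinarith
    nlinarith
  have hT1_lo : 1/2 * (M*N) * p₀ * q ≤ p₀ - p₀ * (1 - t)^m := by
    have h1 : M*t - (M*t)^2 ≤ 1 - (1-t)^m := by linarith
    have e1 : M*(N*q - 2*N^2*q^2) ≤ M*t := mul_le_mul_of_nonneg_left htlo (by linarith)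
    have e2 : t^2 ≤ (N*q)^2 := by nlinarith
    have e3 : M^2*t^2 ≤ M^2*(N*q)^2 := mul_le_mul_of_nonneg_left e2 (by positivity)
    have h2 : M*N*q*(1 - 2*N*q - M*N*q) ≤ M*t - (M*t)^2 := by nlinarith
    have h3 : 1/2 * (M*N*q) ≤ M*N*q*(1 - 2*N*q - M*N*q) := by
      have e4 : 0 ≤ (M*N*q) * (1/2 - 2*N*q - M*N*q) := by
        apply mul_nonneg (by positivity) (by linarith)
      nlinarith
    have h4 : 1/2*(M*N*q) ≤ 1 - (1-t)^m := by linarith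
    have h5 := mul_le_mul_of_nonneg_left h4 (le_of_lt hp0)
    nlinarith
  have hT2_lo : 0 ≤ (1 - p₀) * t^m :=
    mul_nonneg (by linarith) (pow_nonneg ht0 _)
  have hT2_hi : (1 - p₀) * t^m ≤ 1/2 * (M*N) * p₀ * q := by
    have h1 : t^m ≤ (N*q)^m := pow_le_pow_left₀ ht0 hthi _
    have h2 : (N*q)^m = N^m * q^m := mul_pow N q _
    have h3 : q^m ≤ (δ*p₀)^(m-1) * q := by
      have e : q^m = q^(m-1) * q := by
        rw [← pow_succ]; congr 1; omega
      rw [e]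
      exact mul_le_mul_of_nonneg_right (pow_le_pow_left₀ hq0 hq1 _) hq0
    have h4 : (δ*p₀)^(m-1) ≤ δ*p₀ := by
      apply pow_le_of_le_one (by positivity) (by nlinarith) (by omega)
    have hNm : (0:ℝ) ≤ N^m := pow_nonneg (by linarith) _
    have h5 : N^m * q^m ≤ N^m * (δ*p₀*q) := by
      have : q^m ≤ δ*p₀*q := by
        calc q^m ≤ (δ*p₀)^(m-1) * q := h3
          _ ≤ δ*p₀*q := mul_le_mul_of_nonneg_right h4 hq0
      exact mul_le_mul_of_nonneg_left this hNm
    have h6 : N^m * (δ*p₀*q) ≤ (M*N/2)*(p₀*q) := by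
      have := mul_le_mul_of_nonneg_right hδ2 (mul_nonneg (le_of_lt hp0) hq0)
      nlinarith
    have h7 : (1-p₀) * t^m ≤ t^m := by
      nlinarith [pow_nonneg ht0 m]
    calc (1-p₀)*t^m ≤ t^m := h7
      _ ≤ N^m * q^m := by rw [← h2]; exact h1
      _ ≤ N^m * (δ*p₀*q) := h5
      _ ≤ (M*N/2)*(p₀*q) := h6
      _ = 1/2*(M*N)*p₀*q := by ring
  constructor
  · nlinarith
  · nlinarith

/-- Geometric two-sided decay of the Gallager-A density-evolution sequence (Lemma 3). -/
theorem gallagerA_geometric_decay (d_v d_c : ℕ) (hdv : 3 ≤ d_v) (hlt : d_v < d_c)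
    (K : ℝ) (hK : K = ((d_v : ℝ) - 1) * ((d_c : ℝ) - 1)) :
    ∃ δ > (0 : ℝ), ∀ p₀ ∈ Set.Ioc (0 : ℝ) (1 / 2), (3 / 2) * K * p₀ ≤ 1 →
      ∀ q : ℕ → ℝ, q 0 ∈ Set.Icc (0 : ℝ) (δ * p₀) →
        (∀ i : ℕ, q (i + 1) = gallagerA p₀ d_v d_c (q i)) →
        ∀ i : ℕ,
          ((1 / 2) * p₀ * K) ^ i * q 0 ≤ q i ∧ q i ≤ ((3 / 2) * p₀ * K) ^ i * q 0 := by
  have hM3 : (3:ℝ) ≤ (d_v:ℝ) := by exact_mod_cast hdv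
  have hN4 : (4:ℝ) ≤ (d_c:ℝ) := by exact_mod_cast (by omega : 4 ≤ d_c)
  set M : ℝ := (d_v:ℝ) - 1
  set N : ℝ := (d_c:ℝ) - 1
  have hM2 : (2:ℝ) ≤ M := by simp only [M]; linarith
  have hN3 : (3:ℝ) ≤ N := by simp only [N]; linarith
  have hMcast : ((d_v - 1 : ℕ):ℝ) = M := by
    simp only [M]; rw [Nat.cast_sub (by omega)]; norm_num
  have hNcast : ((d_c - 1 : ℕ):ℝ) = N := by
    simp only [N]; rw [Nat.cast_sub (by omega)]; norm_num
  have hKMN : K = M * N := hK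
  have hNpow : (0:ℝ) < N ^ (d_v - 1) := pow_pos (by linarith) _
  set δ : ℝ := min (1 / (2 * (N + M * N))) (M * N / 2 / N ^ (d_v - 1)) with hδdef
  have hNMpos : (0:ℝ) < 2 * (N + M * N) := by nlinarith
  have hδ0 : 0 < δ := by
    apply lt_min
    · positivity
    · positivity
  have hδ1 : 2 * (N + M * N) * δ ≤ 1 := by
    have h := min_le_left (1 / (2 * (N + M * N))) (M * N / 2 / N ^ (d_v - 1))
    rw [← hδdef] at h
    calc 2 * (N + M * N) * δ ≤ 2 * (N + M * N) * (1 / (2 * (N + M * N))) :=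
          mul_le_mul_of_nonneg_left h (le_of_lt hNMpos)
      _ = 1 := by field_simp
  have hδ2 : N ^ (d_v - 1) * δ ≤ M * N / 2 := by
    have h := min_le_right (1 / (2 * (N + M * N))) (M * N / 2 / N ^ (d_v - 1))
    rw [← hδdef] at h
    calc N ^ (d_v - 1) * δ ≤ N ^ (d_v - 1) * (M * N / 2 / N ^ (d_v - 1)) :=
          mul_le_mul_of_nonneg_left h (le_of_lt hNpow)
      _ = M * N / 2 := by field_simp
  refine ⟨δ, hδ0, ?_⟩
  rintro p₀ ⟨hp0, hp1⟩ hKp₀ q ⟨hq00, hq0δ⟩ hrec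
  -- one-step bound packaged
  have step : ∀ x : ℝ, 0 ≤ x → x ≤ δ * p₀ →
      1/2 * K * p₀ * x ≤ gallagerA p₀ d_v d_c x ∧
        gallagerA p₀ d_v d_c x ≤ 3/2 * K * p₀ * x := by
    intro x hx0 hx1
    have h := core_abstract (d_v - 1) (d_c - 1) M N hMcast hNcast (by omega) hM2 hN3
      δ hδ0 hδ1 hδ2 p₀ hp0 hp1 x hx0 hx1
    rw [gallagerA, hKMN]
    exact h
  -- constants
  have hc_lo : 0 ≤ (1/2) * p₀ * K := by
    rw [hKMN]; positivity
  have hc_hi0 : 0 ≤ (3/2) * p₀ * K := by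
    rw [hKMN]; positivity
  have hc_hi1 : (3/2) * p₀ * K ≤ 1 := by
    calc (3/2) * p₀ * K = (3/2) * K * p₀ := by ring
      _ ≤ 1 := hKp₀
  -- main induction
  intro i
  induction i with
  | zero => simp
  | succ i ih =>
    obtain ⟨ilo, ihi⟩ := ih
    have hqi0 : 0 ≤ q i := le_trans (by positivity) ilo
    have hqiδ : q i ≤ δ * p₀ := by
      have h1 : ((3/2) * p₀ * K)^i ≤ 1 := pow_le_one₀ hc_hi0 hc_hi1
      have h2 : ((3/2) * p₀ * K)^i * q 0 ≤ 1 * q 0 :=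
        mul_le_mul_of_nonneg_right h1 hq00
      calc q i ≤ ((3/2) * p₀ * K)^i * q 0 := ihi
        _ ≤ 1 * q 0 := h2
        _ = q 0 := one_mul _
        _ ≤ δ * p₀ := hq0δ
    obtain ⟨slo, shi⟩ := step (q i) hqi0 hqiδ
    rw [hrec i] at *
    constructor
    · calc ((1/2) * p₀ * K)^(i+1) * q 0
          = ((1/2) * p₀ * K) * (((1/2) * p₀ * K)^i * q 0) := by ring
        _ ≤ ((1/2) * p₀ * K) * q i := mul_le_mul_of_nonneg_left ilo hc_lo
        _ = 1/2 * K * p₀ * q i := by ring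
        _ ≤ gallagerA p₀ d_v d_c (q i) := slo
    · calc gallagerA p₀ d_v d_c (q i) ≤ 3/2 * K * p₀ * q i := shi
        _ = ((3/2) * p₀ * K) * q i := by ring
        _ ≤ ((3/2) * p₀ * K) * (((3/2) * p₀ * K)^i * q 0) :=
            mul_le_mul_of_nonneg_left ihi hc_hi0
        _ = ((3/2) * p₀ * K)^(i+1) * q 0 := by ring
end

section
/- The minimum over x > 0 of x + e^{a/x} satisfies lim_{a → ∞} (log a / a) · inf_{x>0} (x + e^{a/x}) = 1. -/
/-!
Splitting at `x = a / t`, the infimum `m(a)` of `x + exp (a / x)` over `x > 0` satisfies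
`a / t ≤ m(a)` whenever `a / t ≤ exp t`, and `m(a) ≤ a / t + exp t` for every `t > 0`.
With `L = log a`, the choice `t = L` gives `m(a) ≥ a / L`, and `t = L - 2 log L` gives
`m(a) ≤ a / (L - 2 log L) + a / L²`; after multiplying by `L / a` both bounds tend to `1`.
-/

open Filter Real Set Topology

noncomputable def expTradeoffInf (a : ℝ) : ℝ :=
  sInf ((fun x : ℝ => x + exp (a / x)) '' Ioi 0)

lemma bddBelow_expTradeoff (a : ℝ) :
    BddBelow ((fun x : ℝ => x + exp (a / x)) '' Ioi 0) := by
  refine ⟨0, ?_⟩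
  rintro _ ⟨x, hx : 0 < x, rfl⟩
  positivity

lemma expTradeoffInf_le {a t : ℝ} (ha : 0 < a) (ht : 0 < t) :
    expTradeoffInf a ≤ a / t + exp t := by
  have hat : a / (a / t) = t := by field_simp
  calc expTradeoffInf a ≤ a / t + exp (a / (a / t)) :=
        csInf_le (bddBelow_expTradeoff a) ⟨a / t, div_pos ha ht, rfl⟩
    _ = a / t + exp t := by rw [hat]

lemma div_le_expTradeoffInf {a t : ℝ} (ht : 0 < t) (h : a / t ≤ exp t) :
    a / t ≤ expTradeoffInf a := by
  refine le_csInf (nonempty_Ioi.image _) ?_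
  rintro _ ⟨x, hx : 0 < x, rfl⟩
  rcases le_or_gt (a / t) x with hle | hlt
  · linarith [exp_pos (a / x)]
  · have : t < a / x := by rw [lt_div_iff₀ hx]; rwa [lt_div_iff₀ ht, mul_comm] at hlt
    linarith [exp_lt_exp.mpr this]

lemma one_le_log_div_mul_expTradeoffInf {a : ℝ} (ha : exp 1 ≤ a) :
    1 ≤ log a / a * expTradeoffInf a := by
  have ha0 : 0 < a := (exp_pos 1).trans_le ha
  have hL : 1 ≤ log a := by rwa [le_log_iff_exp_le ha0]
  have hL0 : 0 < log a := one_pos.trans_le hL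
  have hlow : a / log a ≤ expTradeoffInf a :=
    div_le_expTradeoffInf hL0 <| by rw [exp_log ha0]; exact div_le_self ha0.le hL
  calc 1 = log a / a * (a / log a) := by field_simp
    _ ≤ log a / a * expTradeoffInf a := by gcongr

lemma log_div_mul_expTradeoffInf_le {a : ℝ} (ha : 1 < a) (h : 2 * log (log a) < log a) :
    log a / a * expTradeoffInf a ≤ log a / (log a - 2 * log (log a)) + (log a)⁻¹ := by
  have ha0 : 0 < a := one_pos.trans ha
  have hL0 : 0 < log a := log_pos ha
  have ht : 0 < log a - 2 * log (log a) := by linarith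
  have hexp : exp (log a - 2 * log (log a)) = a / log a ^ 2 := by
    rw [exp_sub, exp_log ha0, ← log_rpow hL0, exp_log (by positivity)]
    norm_cast
  calc log a / a * expTradeoffInf a
      ≤ log a / a * (a / (log a - 2 * log (log a)) + exp (log a - 2 * log (log a))) := by
        gcongr; exact expTradeoffInf_le ha0 ht
    _ = log a / (log a - 2 * log (log a)) + (log a)⁻¹ := by
        rw [hexp]; field_simp

lemma tendsto_self_div_self_sub_two_mul_log :
    Tendsto (fun L : ℝ => L / (L - 2 * log L)) atTop (𝓝 1) := by
  have hratio : Tendsto (fun L : ℝ => (1 - 2 * (log L / L))⁻¹) atTop (𝓝 1) := by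
    have := (tendsto_const_nhds (x := (1 : ℝ)).sub
      (isLittleO_log_id_atTop.tendsto_div_nhds_zero.const_mul 2)).inv₀ (by norm_num)
    simpa using this
  refine hratio.congr' ?_
  filter_upwards [eventually_gt_atTop 0] with L hL
  field_simp

lemma eventually_two_mul_log_lt_self : ∀ᶠ L : ℝ in atTop, 2 * log L < L := by
  filter_upwards [isLittleO_log_id_atTop.tendsto_div_nhds_zero.eventually_lt_const
    (by norm_num : (0 : ℝ) < 1 / 2), eventually_gt_atTop 0] with L h hL
  rw [id, div_lt_iff₀ hL] at h
  linarith

/-- Asymptotics at the heart of Theorem 4: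
`lim_{a → ∞} (log a / a) · inf_{x>0} (x + e^{a/x}) = 1`. -/
theorem lambert_tradeoff_asymptotics :
    Tendsto
      (fun a : ℝ =>
        (Real.log a / a) * sInf ((fun x : ℝ => x + Real.exp (a / x)) '' Set.Ioi 0))
      atTop (nhds 1) := by
  change Tendsto (fun a => log a / a * expTradeoffInf a) atTop (𝓝 1)
  have hupper : Tendsto (fun a => log a / (log a - 2 * log (log a)) + (log a)⁻¹)
      atTop (𝓝 1) := by
    have := (tendsto_self_div_self_sub_two_mul_log.add tendsto_inv_atTop_zero).comp
      tendsto_log_atTop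
    rwa [add_zero] at this
  refine tendsto_of_tendsto_of_tendsto_of_le_of_le' tendsto_const_nhds hupper ?_ ?_
  · filter_upwards [eventually_ge_atTop (exp 1)] with a ha
    exact one_le_log_div_mul_expTradeoffInf ha
  · filter_upwards [eventually_gt_atTop 1,
      tendsto_log_atTop.eventually eventually_two_mul_log_lt_self] with a ha h
    exact log_div_mul_expTradeoffInf_le ha h
end

section
/- For every real x ≥ e, the unique real w ≥ 0 satisfying w·e^w = x obeys log x − log log x ≤ w ≤ log x − (1/2)·log log x. -/
/-- Two-sided bounds on the principal branch of the Lambert W function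
(equation (69) of the paper): for `x ≥ e`, the unique `w ≥ 0` with `w·e^w = x`
satisfies `log x − log log x ≤ w ≤ log x − (1/2)·log log x`. -/
theorem lambertW_bounds (x : ℝ) (hx : Real.exp 1 ≤ x)
    (w : ℝ) (hw : 0 ≤ w) (hwx : w * Real.exp w = x) :
    Real.log x - Real.log (Real.log x) ≤ w ∧
    w ≤ Real.log x - (1 / 2) * Real.log (Real.log x) := by
  have hw1 : 1 ≤ w := by
    by_contra h
    push_neg at h
    have h1 : w * Real.exp w ≤ w * Real.exp 1 :=
      mul_le_mul_of_nonneg_left (Real.exp_le_exp.2 h.le) hw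
    have h2 : w * Real.exp 1 < 1 * Real.exp 1 :=
      mul_lt_mul_of_pos_right h (Real.exp_pos 1)
    rw [one_mul] at h2
    linarith [hwx ▸ hx]
  have hwpos : 0 < w := lt_of_lt_of_le zero_lt_one hw1
  have hL : Real.log x = Real.log w + w := by
    rw [← hwx, Real.log_mul (ne_of_gt hwpos) (Real.exp_ne_zero w), Real.log_exp]
  have hlogw0 : 0 ≤ Real.log w := Real.log_nonneg hw1
  have hwL : w ≤ Real.log x := by linarith
  have hL1 : 1 ≤ Real.log x := hw1.trans hwL
  have hsub : Real.log w ≤ w - 1 := Real.log_le_sub_one_of_pos hwpos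
  have hlow : Real.log w ≤ Real.log (Real.log x) :=
    Real.log_le_log hwpos hwL
  have hq : Real.log w + w ≤ w ^ 2 := by nlinarith
  have h2 : Real.log (Real.log x) ≤ 2 * Real.log w := by
    rw [hL]
    calc Real.log (Real.log w + w) ≤ Real.log (w ^ 2) :=
          Real.log_le_log (by linarith) hq
      _ = 2 * Real.log w := by
          rw [Real.log_pow]; push_cast; ring
  constructor <;> linarith
end
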